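/- Let (w₀,w₁,w₂,w₃,w₄) be positive integer weights with w₀ = 1 and set d = w₃ + 2w₄. Let G ∈ ℂ[x₀,x₁,x₂,x₃] be weighted homogeneous of degree 2w₄ and H ∈ ℂ[x₀,x₁,x₂] be weighted homogeneous of degree d, and put F = x₃·x₄² + x₃·G + H ∈ ℂ[x₀,…,x₄]. If F is quasi-smooth (the only common zero in ℂ⁵ of its five partial derivatives is the origin), then H is irreducible. -/

import Mathlib

/-!
Suppose `H = A * B` with `A`, `B` non-units. Both factors are weighted homogeneous of positive
degree, so they have a common zero `x ≠ 0` on the plane `x₃ = x₄ = 0`: since `w₀ = 1`, the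
resultant of `A` and `B` with respect to `x₀` is a polynomial in `x₁, x₂` vanishing at the
origin, hence at some nonzero point, above which `A` and `B` have a common root. All partial
derivatives of `H = A * B` vanish at `x`, and choosing `x₄` with `x₄² = -G(x)` makes all partial
derivatives of `F = x₃ (x₄² + G) + H` vanish as well, contradicting quasi-smoothness.
-/

open MvPolynomial

theorem Polynomial.eq_monomial_of_natTrailingDegree_eq_natDegree {R : Type*} [Semiring R]
    {f : Polynomial R} (h : f.natTrailingDegree = f.natDegree) :
    f = Polynomial.monomial f.natDegree f.leadingCoeff := by
  ext k
  rw [Polynomial.coeff_monomial]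
  split_ifs with hk
  · rw [← hk, Polynomial.leadingCoeff]
  rcases lt_or_gt_of_ne hk with hlt | hgt
  · exact Polynomial.coeff_eq_zero_of_natDegree_lt hlt
  · exact Polynomial.coeff_eq_zero_of_lt_natTrailingDegree (h ▸ hgt)

theorem Polynomial.resultant_eq_zero_iff_exists_isRoot {K : Type*} [Field K] [IsAlgClosed K]
    {f g : Polynomial K} {n : ℕ} (hf : f ≠ 0) (hg : g.natDegree ≤ n) :
    resultant f g f.natDegree n = 0 ↔ ∃ a, f.IsRoot a ∧ g.IsRoot a := by
  rw [resultant_eq_prod_eval f g n hg (IsAlgClosed.splits f), mul_eq_zero,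
    or_iff_right (pow_ne_zero _ (leadingCoeff_ne_zero.2 hf)), Multiset.prod_eq_zero_iff]
  simp [mem_roots hf]

theorem Finsupp.weight_cons {M : Type*} [AddCommMonoid M] {n : ℕ} (w : Fin (n + 1) → M) (k : ℕ)
    (m : Fin n →₀ ℕ) : weight w (cons k m) = k • w 0 + weight (Fin.tail w) m := by
  simp [weight_eq_sum, Fin.sum_univ_succ, Fin.tail]

namespace MvPolynomial

section Grading

variable {σ R : Type*} [CommRing R] (w : σ → ℕ)

noncomputable def weightedGrading : MvPolynomial σ R →ₐ[R] Polynomial (MvPolynomial σ R) :=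
  aeval fun i => Polynomial.C (X i) * Polynomial.X ^ w i

theorem weightedGrading_monomial (m : σ →₀ ℕ) (a : R) :
    weightedGrading w (monomial m a) = Polynomial.monomial (m.weight w) (monomial m a) := by
  classical
  rw [weightedGrading, aeval_monomial, Finsupp.prod]
  simp only [mul_pow, ← pow_mul, Finset.prod_mul_distrib, Finset.prod_pow_eq_pow_sum]
  rw [← Polynomial.C_mul_X_pow_eq_monomial, Finsupp.weight_apply, Finsupp.sum, monomial_eq,
    Finsupp.prod, Polynomial.algebraMap_apply, algebraMap_eq, map_mul, map_prod]
  simp only [map_pow, smul_eq_mul, mul_comm (w _)]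
  ring

theorem coeff_weightedGrading (p : MvPolynomial σ R) (k : ℕ) :
    (weightedGrading w p).coeff k = weightedHomogeneousComponent w k p := by
  classical
  conv_lhs => rw [p.as_sum]
  simp only [map_sum, weightedGrading_monomial, Polynomial.finsetSum_coeff,
    Polynomial.coeff_monomial, weightedHomogeneousComponent_apply, Finset.sum_filter]

theorem eval_one_weightedGrading (p : MvPolynomial σ R) :
    (weightedGrading w p).eval 1 = p := by
  induction p using MvPolynomial.induction_on' with
  | monomial m a => simp [weightedGrading_monomial]
  | add p q hp hq => simp [hp, hq]

theorem weightedGrading_injective : Function.Injective (weightedGrading (R := R) w) :=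
  Function.LeftInverse.injective (eval_one_weightedGrading w)

theorem isWeightedHomogeneous_iff_weightedGrading_eq {p : MvPolynomial σ R} {d : ℕ} :
    IsWeightedHomogeneous w p d ↔ weightedGrading w p = Polynomial.monomial d p := by
  refine ⟨fun h => ?_, fun h => ?_⟩
  · ext1 k
    rw [coeff_weightedGrading, Polynomial.coeff_monomial]
    split_ifs with hk
    · exact hk ▸ h.weightedHomogeneousComponent_same
    · exact h.weightedHomogeneousComponent_ne k (Ne.symm hk)
  · have := congr_arg (Polynomial.coeff · d) h
    simp only [coeff_weightedGrading, Polynomial.coeff_monomial_same] at this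
    exact this ▸ weightedHomogeneousComponent_isWeightedHomogeneous d p

/-- The grading turns `p * q` into a monomial in `T`; over a domain, extreme degrees in `T` add
up, so the image of `p` is a monomial too. -/
theorem IsWeightedHomogeneous.of_mul_left [IsDomain R] {p q : MvPolynomial σ R} {d : ℕ}
    (h : IsWeightedHomogeneous w (p * q) d) (hp : p ≠ 0) (hq : q ≠ 0) :
    ∃ e, IsWeightedHomogeneous w p e := by
  classical
  set f := weightedGrading w p
  set g := weightedGrading w q
  have hf : f ≠ 0 := (map_ne_zero_iff _ (weightedGrading_injective w)).2 hp
  have hg : g ≠ 0 := (map_ne_zero_iff _ (weightedGrading_injective w)).2 hq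
  have hfg : f * g = Polynomial.monomial d (p * q) := by
    rw [← map_mul, ← (isWeightedHomogeneous_iff_weightedGrading_eq w).1 h]
  have hdeg := Polynomial.natDegree_mul hf hg
  have htrail := Polynomial.natTrailingDegree_mul hf hg
  rw [hfg, Polynomial.natDegree_monomial, if_neg (mul_ne_zero hp hq)] at hdeg
  rw [hfg, Polynomial.natTrailingDegree_monomial (mul_ne_zero hp hq)] at htrail
  have hf_mono : f = Polynomial.monomial f.natDegree f.leadingCoeff :=
    Polynomial.eq_monomial_of_natTrailingDegree_eq_natDegree <| by
      have := f.natTrailingDegree_le_natDegree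
      have := g.natTrailingDegree_le_natDegree
      omega
  have hlead : f.leadingCoeff = p := by
    have : f.eval 1 = p := eval_one_weightedGrading w p
    rwa [hf_mono, Polynomial.eval_monomial, one_pow, mul_one] at this
  rw [hlead] at hf_mono
  exact ⟨f.natDegree, (isWeightedHomogeneous_iff_weightedGrading_eq w).2 hf_mono⟩

end Grading

section Basic

variable {σ τ K : Type*}

theorem IsWeightedHomogeneous.isUnit_iff [Field K] {w : σ → ℕ} (hw : ∀ i, w i ≠ 0)
    {p : MvPolynomial σ K} {d : ℕ} (hp : IsWeightedHomogeneous w p d) (hp0 : p ≠ 0) :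
    IsUnit p ↔ d = 0 := by
  classical
  refine ⟨fun hu => ?_, fun hd => ?_⟩
  · obtain ⟨r, -, rfl⟩ := isUnit_iff_eq_C_of_isReduced.1 hu
    exact hp.inj_right hp0 (isWeightedHomogeneous_C w r)
  · have := Finsupp.nonTorsionWeight_of ℕ (w := w) hw
    have hpC : p = C (coeff 0 p) := by
      ext m
      rw [coeff_C]
      split_ifs with hm
      · rw [hm]
      · exact hp.coeff_eq_zero m fun h =>
          hm ((Finsupp.weight_eq_zero_iff_eq_zero w).1 (h.trans hd)).symm
    refine hpC ▸ (IsUnit.mk0 _ fun h => hp0 ?_).map C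
    rw [hpC, h, map_zero]

theorem IsWeightedHomogeneous.bind₁ {M : Type*} [AddCommMonoid M] [CommSemiring K]
    {w : σ → M} {w' : τ → M} {p : MvPolynomial σ K} {d : M} (hp : IsWeightedHomogeneous w p d)
    {v : σ → MvPolynomial τ K} (hv : ∀ i, IsWeightedHomogeneous w' (v i) (w i)) :
    IsWeightedHomogeneous w' (bind₁ v p) d := by
  classical
  rw [p.as_sum, map_sum]
  refine IsWeightedHomogeneous.sum _ _ _ fun m hm => ?_
  rw [bind₁_monomial, ← hp (mem_support_iff.1 hm), Finsupp.weight_apply, Finsupp.sum]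
  exact (IsWeightedHomogeneous.prod _ _ _ fun i _ => (hv i).pow (m i)).C_mul _

variable [CommSemiring K]

theorem eval_bind₁ (x : τ → K) (g : σ → MvPolynomial τ K) (p : MvPolynomial σ K) :
    eval x (bind₁ g p) = eval (fun i => eval x (g i)) p :=
  eval₂Hom_bind₁ _ _ _ _

theorem vars_mul_eq [NoZeroDivisors K] [DecidableEq σ] {p q : MvPolynomial σ K} (hp : p ≠ 0)
    (hq : q ≠ 0) : (p * q).vars = p.vars ∪ q.vars := by
  simp only [vars_def, degrees_mul_eq hp hq, Multiset.toFinset_add]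

theorem notMem_vars_iff {p : MvPolynomial σ K} {i : σ} :
    i ∉ p.vars ↔ ∀ m ∈ p.support, m i = 0 := by
  simp [mem_vars_iff_mem_support]

theorem eval_update_of_notMem_vars [DecidableEq σ] {p : MvPolynomial σ K} {i : σ}
    (h : i ∉ p.vars) (x : σ → K) (c : K) : eval (Function.update x i c) p = eval x p :=
  eval₂Hom_congr' rfl (fun _ hj _ => Function.update_of_ne (ne_of_mem_of_not_mem hj h) _ _) rfl

end Basic

section Elimination

variable {R : Type*} [CommSemiring R] {n : ℕ} {w : Fin (n + 1) → ℕ}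
  {P : MvPolynomial (Fin (n + 1)) R} {d : ℕ}

theorem natDegree_finSuccEquiv_le_of_isWeightedHomogeneous (hw0 : w 0 ≠ 0)
    (hP : IsWeightedHomogeneous w P d) : (finSuccEquiv R n P).natDegree ≤ d := by
  rw [natDegree_finSuccEquiv, degreeOf_le_iff]
  exact fun m hm => (Finsupp.le_weight w hw0 m).trans_eq (hP (mem_support_iff.1 hm))

theorem coeff_finSuccEquiv_of_isWeightedHomogeneous (hw0 : w 0 = 1) (hw : ∀ i, w i ≠ 0)
    (hP : IsWeightedHomogeneous w P d) :
    (finSuccEquiv R n P).coeff d = C (coeff (Finsupp.single 0 d) P) := by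
  have := Finsupp.nonTorsionWeight_of ℕ (w := Fin.tail w) fun i => hw i.succ
  ext m
  rw [finSuccEquiv_coeff_coeff, coeff_C]
  split_ifs with hm
  · rw [← hm, Finsupp.cons_zero_eq_single_zero]
  · refine hP.coeff_eq_zero _ ?_
    rw [Finsupp.weight_cons, hw0, smul_eq_mul, mul_one, Ne, add_eq_left,
      Finsupp.weight_eq_zero_iff_eq_zero]
    exact Ne.symm hm

theorem eval_cons_zero_of_isWeightedHomogeneous (hw0 : w 0 = 1)
    (hP : IsWeightedHomogeneous w P d) (a : R) :
    eval (Fin.cons a 0) P = coeff (Finsupp.single 0 d) P * a ^ d := by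
  rw [eval_eq_eval_mv_eval', ← Polynomial.eval_monomial]
  congr 1
  ext k
  rw [Polynomial.coeff_map, eval_zero, constantCoeff_eq, finSuccEquiv_coeff_coeff,
    Finsupp.cons_zero_eq_single_zero, Polynomial.coeff_monomial]
  split_ifs with hk
  · rw [hk]
  · exact hP.coeff_eq_zero _ (by simpa [Finsupp.weight_single, hw0] using Ne.symm hk)

end Elimination

section CommonZero

variable {K : Type*} [Field K] [IsAlgClosed K] {n : ℕ}

/-- Since `P` has the term `c * x₀ ^ dp`, the resultant in `x₀` commutes with specializing the
other variables. -/
theorem eval_resultant_finSuccEquiv_eq_zero_iff {P Q : MvPolynomial (Fin (n + 1)) K}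
    {dp dq : ℕ} {c : K} (hc : c ≠ 0) (hPdeg : (finSuccEquiv K n P).natDegree ≤ dp)
    (hPlead : (finSuccEquiv K n P).coeff dp = C c) (hQdeg : (finSuccEquiv K n Q).natDegree ≤ dq)
    (y : Fin n → K) :
    eval y ((finSuccEquiv K n P).resultant (finSuccEquiv K n Q) dp dq) = 0 ↔
      ∃ a, eval (Fin.cons a y) P = 0 ∧ eval (Fin.cons a y) Q = 0 := by
  set f := (finSuccEquiv K n P).map (eval y)
  have hf_lead : f.coeff dp = c := by rw [Polynomial.coeff_map, hPlead, eval_C]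
  have hf_deg : f.natDegree = dp :=
    (Polynomial.natDegree_map_le.trans hPdeg).antisymm
      (Polynomial.le_natDegree_of_ne_zero (hf_lead ▸ hc))
  have hf0 : f ≠ 0 := fun h => hc (by rw [← hf_lead, h, Polynomial.coeff_zero])
  rw [← Polynomial.resultant_map_map, ← hf_deg,
    Polynomial.resultant_eq_zero_iff_exists_isRoot hf0 (Polynomial.natDegree_map_le.trans hQdeg)]
  simp [eval_eq_eval_mv_eval', f]

theorem exists_ne_zero_eval_eq_zero {N : MvPolynomial (Fin (n + 2)) K} (h : eval 0 N = 0) :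
    ∃ x ≠ 0, eval x N = 0 := by
  set f := finSuccEquiv K (n + 1) N with hf_def
  by_cases hf : f.natDegree = 0
  · refine ⟨Fin.cons 1 0, fun h1 => one_ne_zero (congr_fun h1 0), ?_⟩
    have key (a : K) : eval (Fin.cons a 0) N = eval 0 (f.coeff 0) := by
      rw [eval_eq_eval_mv_eval', ← hf_def, Polynomial.eq_C_of_natDegree_eq_zero hf]
      simp
    rwa [key, ← key 0, show (Fin.cons 0 0 : Fin (n + 2) → K) = 0 from Matrix.cons_zero_zero]
  -- the factor `X 0` makes the chosen point nonzero
  have hlc : f.leadingCoeff * X 0 ≠ 0 :=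
    mul_ne_zero (Polynomial.leadingCoeff_ne_zero.2 fun h0 => hf (by rw [h0]; rfl)) (X_ne_zero 0)
  obtain ⟨y, hy⟩ : ∃ y, eval y (f.leadingCoeff * X 0) ≠ 0 := by
    by_contra! hy
    exact hlc (funext fun y => by simpa using hy y)
  rw [map_mul, eval_X, mul_ne_zero_iff] at hy
  have hdeg : (f.map (eval y)).degree ≠ 0 := by
    rw [Polynomial.degree_map_eq_of_leadingCoeff_ne_zero _ hy.1]
    exact fun h0 => hf (Polynomial.natDegree_eq_of_degree_eq_some h0)
  obtain ⟨a, ha⟩ := IsAlgClosed.exists_root _ hdeg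
  refine ⟨Fin.cons a y, fun h0 => hy.2 (congr_fun (Matrix.cons_eq_zero_iff.1 h0).2 0), ?_⟩
  rwa [eval_eq_eval_mv_eval']

theorem exists_ne_zero_eval_eq_zero_of_isWeightedHomogeneous {w : Fin (n + 3) → ℕ}
    (hw0 : w 0 = 1) (hw : ∀ i, w i ≠ 0) {P Q : MvPolynomial (Fin (n + 3)) K} {dp dq : ℕ}
    (hP : IsWeightedHomogeneous w P dp) (hQ : IsWeightedHomogeneous w Q dq)
    (hdp : dp ≠ 0) (hdq : dq ≠ 0) : ∃ x ≠ 0, eval x P = 0 ∧ eval x Q = 0 := by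
  wlog hcP : coeff (Finsupp.single 0 dp) P ≠ 0 generalizing P Q dp dq
  · by_cases hcQ : coeff (Finsupp.single 0 dq) Q = 0
    · refine ⟨Fin.cons 1 0, fun h => one_ne_zero (congr_fun h 0), ?_, ?_⟩
      · rw [eval_cons_zero_of_isWeightedHomogeneous hw0 hP, not_not.1 hcP, zero_mul]
      · rw [eval_cons_zero_of_isWeightedHomogeneous hw0 hQ, hcQ, zero_mul]
    · obtain ⟨x, hx, hxQ, hxP⟩ := this hQ hP hdq hdp hcQ
      exact ⟨x, hx, hxP, hxQ⟩
  have hR := eval_resultant_finSuccEquiv_eq_zero_iff hcP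
    (natDegree_finSuccEquiv_le_of_isWeightedHomogeneous (hw 0) hP)
    (coeff_finSuccEquiv_of_isWeightedHomogeneous hw0 hw hP)
    (natDegree_finSuccEquiv_le_of_isWeightedHomogeneous (hw 0) hQ)
  obtain ⟨y, hy, hRy⟩ := exists_ne_zero_eval_eq_zero <| (hR 0).2 ⟨0, by
    simp [eval_cons_zero_of_isWeightedHomogeneous hw0 hP,
      eval_cons_zero_of_isWeightedHomogeneous hw0 hQ, hdp, hdq]⟩
  obtain ⟨a, ha⟩ := (hR y).1 hRy
  exact ⟨Fin.cons a y, fun h => hy (Matrix.cons_eq_zero_iff.1 h).2, ha⟩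

theorem exists_ne_zero_eval_eq_zero_of_isWeightedHomogeneous_mul {w : Fin 5 → ℕ}
    (hw0 : w 0 = 1) (hw : ∀ i, w i ≠ 0) {A B : MvPolynomial (Fin 5) K} {d : ℕ}
    (hAB : IsWeightedHomogeneous w (A * B) d) (hAB0 : A * B ≠ 0) (hA : ¬IsUnit A)
    (hB : ¬IsUnit B) : ∃ x ≠ 0, x 3 = 0 ∧ x 4 = 0 ∧ eval x A = 0 ∧ eval x B = 0 := by
  have hA0 : A ≠ 0 := left_ne_zero_of_mul hAB0
  have hB0 : B ≠ 0 := right_ne_zero_of_mul hAB0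
  obtain ⟨dA, hAw⟩ := hAB.of_mul_left w hA0 hB0
  obtain ⟨dB, hBw⟩ := (mul_comm A B ▸ hAB).of_mul_left w hB0 hA0
  let ρ : Fin 5 → MvPolynomial (Fin 3) K := ![X 0, X 1, X 2, 0, 0]
  have hρ : ∀ i, IsWeightedHomogeneous ![w 0, w 1, w 2] (ρ i) (w i) := by
    intro i
    fin_cases i
    exacts [isWeightedHomogeneous_X _ _ 0, isWeightedHomogeneous_X _ _ 1,
      isWeightedHomogeneous_X _ _ 2, isWeightedHomogeneous_zero _ _ _,
      isWeightedHomogeneous_zero _ _ _]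
  obtain ⟨y, hy, hyA, hyB⟩ := exists_ne_zero_eval_eq_zero_of_isWeightedHomogeneous (n := 0)
    hw0 (fun i => by fin_cases i <;> exact hw _) (hAw.bind₁ hρ) (hBw.bind₁ hρ)
    (mt (hAw.isUnit_iff hw hA0).2 hA) (mt (hBw.isUnit_iff hw hB0).2 hB)
  have hρy : (fun i => eval y (ρ i)) = ![y 0, y 1, y 2, 0, 0] := by
    ext i
    fin_cases i <;> simp [ρ]
  rw [eval_bind₁, hρy] at hyA hyB
  refine ⟨_, fun h => hy ?_, rfl, rfl, hyA, hyB⟩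
  funext j
  fin_cases j
  exacts [congr_fun h 0, congr_fun h 1, congr_fun h 2]

end CommonZero

section QuasiSmooth

variable {σ K : Type*} [Field K]

def IsQuasiSmooth (F : MvPolynomial σ K) : Prop :=
  ∀ p : σ → K, (∀ i, eval p (pderiv i F) = 0) → p = 0

theorem IsQuasiSmooth.eq_zero_of_eval_pderiv_eq_zero [IsAlgClosed K] [DecidableEq σ]
    {G H : MvPolynomial σ K} {a b : σ} (hqs : IsQuasiSmooth (X a * X b ^ 2 + X a * G + H))
    (hab : a ≠ b) (hG : b ∉ G.vars) (x : σ → K) (hxa : x a = 0) (hxb : x b = 0)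
    (hH : ∀ c i, eval (Function.update x b c) (pderiv i H) = 0) : x = 0 := by
  obtain ⟨c, hc⟩ := IsAlgClosed.exists_pow_nat_eq (-eval x G) two_pos
  have hF : X a * X b ^ 2 + X a * G + H = X a * (X b ^ 2 + G) + H := by ring
  have hsing := hqs (Function.update x b c) fun i => by
    simp [hF, Derivation.leibniz, eval_update_of_notMem_vars hG, hab, hxa, hc, hH c i]
  calc x = Function.update (Function.update x b c) b 0 := by
        rw [Function.update_idem, ← hxb, Function.update_eq_self]
    _ = 0 := by simp [hsing]

end QuasiSmooth

end MvPolynomial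

theorem quadratic_involution_H_irreducible_general
    (w : Fin 5 → ℕ) (hw : ∀ i, 0 < w i) (hw0 : w 0 = 1)
    (G H : MvPolynomial (Fin 5) ℂ)
    (hGsupp : ∀ m ∈ G.support, m 4 = 0)
    (hHsupp : ∀ m ∈ H.support, m 3 = 0 ∧ m 4 = 0)
    (hHhom : IsWeightedHomogeneous w H (w 3 + 2 * w 4))
    (F : MvPolynomial (Fin 5) ℂ)
    (hF : F = X 3 * X 4 ^ 2 + X 3 * G + H)
    (hqs : ∀ p : Fin 5 → ℂ, (∀ i : Fin 5, eval p (pderiv i F) = 0) → p = 0) :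
    Irreducible H := by
  have hw' : ∀ i, w i ≠ 0 := fun i => (hw i).ne'
  have hsing := (hF ▸ hqs : IsQuasiSmooth _).eq_zero_of_eval_pderiv_eq_zero (a := 3) (b := 4)
    (by decide) (notMem_vars_iff.2 hGsupp)
  have hH0 : H ≠ 0 := by
    rintro rfl
    exact one_ne_zero (congr_fun (hsing (Pi.single 0 1) rfl rfl (by simp)) 0)
  refine ⟨fun hu => ?_, fun A B hAB => ?_⟩
  · have := (hHhom.isUnit_iff hw' hH0).1 hu
    have := hw 3
    omega
  by_contra! hAB_units
  have hH4 : 4 ∉ H.vars := notMem_vars_iff.2 fun m hm => (hHsupp m hm).2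
  rw [hAB] at hH0 hHhom hH4
  obtain ⟨x, hx, hx3, hx4, hxA, hxB⟩ := exists_ne_zero_eval_eq_zero_of_isWeightedHomogeneous_mul
    hw0 hw' hHhom hH0 hAB_units.1 hAB_units.2
  classical
  rw [vars_mul_eq (left_ne_zero_of_mul hH0) (right_ne_zero_of_mul hH0), Finset.mem_union,
    not_or] at hH4
  exact hx <| hsing x hx3 hx4 fun c i => by
    simp [hAB, Derivation.leibniz, eval_update_of_notMem_vars hH4.1,
      eval_update_of_notMem_vars hH4.2, hxA, hxB]

/-- Quadratic involution setting (Lemma 4.2 of the paper): if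
`F = x₃x₄² + x₃·G + H` is quasi-smooth, where `G ∈ ℂ[x₀,x₁,x₂,x₃]` is weighted
homogeneous of degree `2w₄` and `H ∈ ℂ[x₀,x₁,x₂]` is weighted homogeneous of
degree `d = w₃ + 2w₄`, then `H` is irreducible. -/
theorem quadratic_involution_H_irreducible
    (w : Fin 5 → ℕ) (hw : ∀ i, 0 < w i) (hw0 : w 0 = 1)
    (G H : MvPolynomial (Fin 5) ℂ)
    (hGsupp : ∀ m ∈ G.support, m 4 = 0)
    (hHsupp : ∀ m ∈ H.support, m 3 = 0 ∧ m 4 = 0)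
    (hGhom : IsWeightedHomogeneous w G (2 * w 4))
    (hHhom : IsWeightedHomogeneous w H (w 3 + 2 * w 4))
    (F : MvPolynomial (Fin 5) ℂ)
    (hF : F = X 3 * X 4 ^ 2 + X 3 * G + H)
    (hqs : ∀ p : Fin 5 → ℂ, (∀ i : Fin 5, eval p (pderiv i F) = 0) → p = 0) :
    Irreducible H :=
  quadratic_involution_H_irreducible_general w hw hw0 G H hGsupp hHsupp hHhom F hF hqs
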